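/- Channel-LCU correctness (exact, two Kraus operators): let A₀, A₁ be matrices on ℂ^d with exact block-encodings B₀, B₁ (unitaries on ℂ² ⊗ ℂ^d with (⟨0|⊗I)B_j(|0⟩⊗I) = A_j). Let P be a single-qubit unitary with P|0⟩ = (|0⟩+|1⟩)/√2 and SELECTC = |0⟩⟨0| ⊗ B₀ + |1⟩⟨1| ⊗ B₁ acting on ℂ² ⊗ ℂ² ⊗ ℂ^d. Then for every density matrix ρ on ℂ^d, applying (P ⊗ I ⊗ I) then SELECTC to |0⟩⟨0| ⊗ |0⟩⟨0| ⊗ ρ, and projecting the middle (block-encoding ancilla) register onto |0⟩ and tracing out the first register, yields (1/2)(A₀ ρ A₀† + A₁ ρ A₁†). -/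
import Mathlib

open Matrix Kronecker ComplexOrder

lemma block_entry_aux (d : ℕ) (A : Matrix (Fin d) (Fin d) ℂ)
    (B : Matrix (Fin 2 × Fin d) (Fin 2 × Fin d) ℂ)
    (hB : ∀ i j, B (0,i) (0,j) = A i j) (ρ : Matrix (Fin d) (Fin d) ℂ) (i j : Fin d) :
    (B * ((!![1,0;0,0] : Matrix (Fin 2) (Fin 2) ℂ) ⊗ₖ ρ) * Bᴴ) (0,i) (0,j)
      = (A * ρ * Aᴴ) i j := by
  simp only [Matrix.mul_apply, Matrix.kroneckerMap_apply, Matrix.conjTranspose_apply,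
    Fintype.sum_prod_type, Fin.sum_univ_two,
    Matrix.cons_val', Matrix.cons_val_zero, Matrix.cons_val_one, Matrix.head_cons,
    Matrix.empty_val', Matrix.cons_val_fin_one, Matrix.head_fin_const, Matrix.of_apply,
    one_mul, zero_mul, mul_zero, mul_one, add_zero, zero_add,
    Finset.sum_const_zero, hB]

lemma kron_conjT {m n p q : Type*} (A : Matrix m n ℂ) (B : Matrix p q ℂ) :
    (A ⊗ₖ B)ᴴ = Aᴴ ⊗ₖ Bᴴ := by
  ext ⟨a, b⟩ ⟨c, e⟩
  simp [Matrix.conjTranspose_apply, Matrix.kroneckerMap_apply, star_mul']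

/-- Channel-LCU correctness (exact, two Kraus operators): applying
`P ⊗ I ⊗ I` and then `SELECTC = |0⟩⟨0| ⊗ B₀ + |1⟩⟨1| ⊗ B₁` to
`|0⟩⟨0| ⊗ |0⟩⟨0| ⊗ ρ`, projecting the block-encoding ancilla onto `|0⟩`, and
tracing out the control register yields `(1/2)(A₀ρA₀† + A₁ρA₁†)`. -/
theorem channel_lcu_two_kraus (d : ℕ)
    (A₀ A₁ : Matrix (Fin d) (Fin d) ℂ)
    (B₀ B₁ : Matrix (Fin 2 × Fin d) (Fin 2 × Fin d) ℂ)
    (hB₀u : B₀ ∈ Matrix.unitaryGroup (Fin 2 × Fin d) ℂ)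
    (hB₁u : B₁ ∈ Matrix.unitaryGroup (Fin 2 × Fin d) ℂ)
    (hB₀ : ∀ i j : Fin d, B₀ (0, i) (0, j) = A₀ i j)
    (hB₁ : ∀ i j : Fin d, B₁ (0, i) (0, j) = A₁ i j)
    (P : Matrix (Fin 2) (Fin 2) ℂ) (hP : P ∈ Matrix.unitaryGroup (Fin 2) ℂ)
    (hPprep : P * (!![1; 0] : Matrix (Fin 2) (Fin 1) ℂ)
      = ((1 / Real.sqrt 2 : ℝ) : ℂ) • ((!![1; 0] : Matrix (Fin 2) (Fin 1) ℂ) + !![0; 1]))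
    (SELECTC : Matrix (Fin 2 × (Fin 2 × Fin d)) (Fin 2 × (Fin 2 × Fin d)) ℂ)
    (hSELECTC : SELECTC = (!![1, 0; 0, 0] : Matrix (Fin 2) (Fin 2) ℂ) ⊗ₖ B₀
        + (!![0, 0; 0, 1] : Matrix (Fin 2) (Fin 2) ℂ) ⊗ₖ B₁)
    (ρ : Matrix (Fin d) (Fin d) ℂ) (hρ : ρ.PosSemidef) (htr : ρ.trace = 1)
    (σ : Matrix (Fin 2 × (Fin 2 × Fin d)) (Fin 2 × (Fin 2 × Fin d)) ℂ)
    (hσ : σ = SELECTC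
        * ((P ⊗ₖ (1 : Matrix (Fin 2 × Fin d) (Fin 2 × Fin d) ℂ))
            * ((!![1, 0; 0, 0] : Matrix (Fin 2) (Fin 2) ℂ)
                ⊗ₖ ((!![1, 0; 0, 0] : Matrix (Fin 2) (Fin 2) ℂ) ⊗ₖ ρ))
            * (P ⊗ₖ (1 : Matrix (Fin 2 × Fin d) (Fin 2 × Fin d) ℂ))ᴴ)
        * SELECTCᴴ) :
    (Matrix.of fun i j : Fin d => ∑ ctrl : Fin 2, σ (ctrl, (0, i)) (ctrl, (0, j)))
      = ((1 / 2 : ℝ) : ℂ) • (A₀ * ρ * A₀ᴴ + A₁ * ρ * A₁ᴴ) := by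
  have hc : ∀ a : Fin 2, P a 0 = ((1 / Real.sqrt 2 : ℝ) : ℂ) := by
    intro a
    have h := congrFun (congrFun hPprep a) 0
    fin_cases a <;>
      simpa [Matrix.mul_apply, Fin.sum_univ_two] using h
  -- Step 1: P * |0⟩⟨0| * Pᴴ = (1/2) • J
  have hPEP : P * (!![1,0;0,0] : Matrix (Fin 2) (Fin 2) ℂ) * Pᴴ
      = ((1 / 2 : ℝ) : ℂ) • (!![1,1;1,1] : Matrix (Fin 2) (Fin 2) ℂ) := by
    have h2 : ((Real.sqrt 2 : ℝ) : ℂ) * ((Real.sqrt 2 : ℝ) : ℂ) = 2 := by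
      norm_cast
      rw [Real.mul_self_sqrt] <;> norm_num
    have hcc : (((Real.sqrt 2 : ℝ) : ℂ))⁻¹ * (((Real.sqrt 2 : ℝ) : ℂ))⁻¹ = 2⁻¹ := by
      rw [← mul_inv, h2]
    ext a b
    fin_cases a <;> fin_cases b <;>
      simp [Matrix.mul_apply, Fin.sum_univ_two, Matrix.conjTranspose_apply, hc, hcc]
  -- Step 2: the conjugated middle matrix
  set M : Matrix (Fin 2 × Fin d) (Fin 2 × Fin d) ℂ :=
    (!![1,0;0,0] : Matrix (Fin 2) (Fin 2) ℂ) ⊗ₖ ρ with hM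
  have hmid : (P ⊗ₖ (1 : Matrix (Fin 2 × Fin d) (Fin 2 × Fin d) ℂ))
      * ((!![1,0;0,0] : Matrix (Fin 2) (Fin 2) ℂ) ⊗ₖ M)
      * (P ⊗ₖ (1 : Matrix (Fin 2 × Fin d) (Fin 2 × Fin d) ℂ))ᴴ
      = ((1 / 2 : ℝ) : ℂ) • ((!![1,1;1,1] : Matrix (Fin 2) (Fin 2) ℂ) ⊗ₖ M) := by
    rw [kron_conjT]
    rw [← Matrix.mul_kronecker_mul, ← Matrix.mul_kronecker_mul]
    simp only [Matrix.conjTranspose_one, Matrix.one_mul, Matrix.mul_one]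
    rw [hPEP, Matrix.smul_kronecker]
  rw [hmid] at hσ
  subst hσ hSELECTC
  ext i j
  simp only [Matrix.of_apply, Matrix.smul_apply, Matrix.add_apply, Matrix.mul_smul,
    Matrix.smul_mul, Matrix.add_mul, Matrix.mul_add, Matrix.conjTranspose_add,
    kron_conjT, Fin.sum_univ_two]
  simp only [← Matrix.mul_kronecker_mul]
  have e00 : (!![1,0;0,0] : Matrix (Fin 2) (Fin 2) ℂ) * !![1,1;1,1]
      * (!![1,0;0,0] : Matrix (Fin 2) (Fin 2) ℂ)ᴴ = !![1,0;0,0] := by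
    ext a b
    fin_cases a <;> fin_cases b <;>
      simp [Matrix.mul_apply, Fin.sum_univ_two, Matrix.conjTranspose_apply]
  have e01 : (!![1,0;0,0] : Matrix (Fin 2) (Fin 2) ℂ) * !![1,1;1,1]
      * (!![0,0;0,1] : Matrix (Fin 2) (Fin 2) ℂ)ᴴ = !![0,1;0,0] := by
    ext a b
    fin_cases a <;> fin_cases b <;>
      simp [Matrix.mul_apply, Fin.sum_univ_two, Matrix.conjTranspose_apply]
  have e10 : (!![0,0;0,1] : Matrix (Fin 2) (Fin 2) ℂ) * !![1,1;1,1]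
      * (!![1,0;0,0] : Matrix (Fin 2) (Fin 2) ℂ)ᴴ = !![0,0;1,0] := by
    ext a b
    fin_cases a <;> fin_cases b <;>
      simp [Matrix.mul_apply, Fin.sum_univ_two, Matrix.conjTranspose_apply]
  have e11 : (!![0,0;0,1] : Matrix (Fin 2) (Fin 2) ℂ) * !![1,1;1,1]
      * (!![0,0;0,1] : Matrix (Fin 2) (Fin 2) ℂ)ᴴ = !![0,0;0,1] := by
    ext a b
    fin_cases a <;> fin_cases b <;>
      simp [Matrix.mul_apply, Fin.sum_univ_two, Matrix.conjTranspose_apply]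
  rw [e00, e01, e10, e11]
  simp only [Matrix.kroneckerMap_apply, hM,
    block_entry_aux d A₀ B₀ hB₀ ρ i j, block_entry_aux d A₁ B₁ hB₁ ρ i j]
  norm_num
  ring
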